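/- The left-normed non-associative exponential exp_l(x) := Σ_{n≥0} (1/n!)·x^n, with x^n the left-normed power ((xx)x)⋯x, is a group-like element of the non-associative Hopf algebra k{{x}}: Δ(exp_l(x)) = exp_l(x) ⊗ exp_l(x) and ε(exp_l(x)) = 1. -/

import Mathlib

/- STATEMENT 8: exp_l(x) := Σ_{n≥0} x^n/n! (left-normed powers) is group-like in
k{{x}}: Δ(exp_l(x)) = exp_l(x) ⊗ exp_l(x) and ε(exp_l(x)) = 1.  This is stated
coefficientwise: monomials of k{{x}} are the elements of the free unital magma on one
generator (`Option (FreeMagma Unit)`, with `none` the empty monomial 1), Δ is the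
algebra-map comultiplication with Δ(x) = x⊗1 + 1⊗x, and a series is determined by its
coefficient function. -/

open FreeMagma

abbrev FM1 := FreeMagma Unit

/-- Number of letters of a monomial. -/
def szM : FM1 → ℕ
  | .of _ => 1
  | .mul l r => szM l + szM r

def szO : Option FM1 → ℕ
  | none => 0
  | some w => szM w

/-- `lnp n` is the left-normed power x^{n+1} = ((x·x)·x)⋯x. -/
def lnp : ℕ → FM1
  | 0 => .of ()
  | n + 1 => .mul (lnp n) (.of ())

/-- The left-normed power xⁿ as a (possibly empty) monomial. -/
def leftPow : ℕ → Option FM1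
  | 0 => none
  | n + 1 => some (lnp n)

/-- The coefficient function of exp_l(x) = Σ_{n≥0} xⁿ/n!. -/
def expCoeff : Option FM1 → ℚ := fun w =>
  if w = leftPow (szO w) then ((szO w).factorial : ℚ)⁻¹ else 0

/-- All factorizations u = u₁·u₂ of a monomial of the free unital magma. -/
def factorizations : Option FM1 → List (Option FM1 × Option FM1)
  | none => [(none, none)]
  | some (.of i) => [(none, some (.of i)), (some (.of i), none)]
  | some (.mul p q) =>
      [(none, some (.mul p q)), (some (.mul p q), none), (some p, some q)]

/-- The coefficient of Δ(w) (w a monomial) at the basis element u ⊗ v, where Δ is the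
unique comultiplication with Δ(x) = x ⊗ 1 + 1 ⊗ x which is an algebra homomorphism. -/
def deltaCoeff : FM1 → Option FM1 → Option FM1 → ℚ
  | .of _, u, v =>
      (if u = some (.of ()) ∧ v = none then 1 else 0) +
        (if u = none ∧ v = some (.of ()) then 1 else 0)
  | .mul a b, u, v =>
      ((factorizations u).map fun s =>
        ((factorizations v).map fun t =>
          deltaCoeff a s.1 t.1 * deltaCoeff b s.2 t.2).sum).sum

/-- The coefficient of Δ(w) at u ⊗ v for w a monomial of the free *unital* magma. -/
def deltaCoeffO : Option FM1 → Option FM1 → Option FM1 → ℚ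
  | none, u, v => if u = none ∧ v = none then 1 else 0
  | some w, u, v => deltaCoeff w u v

/-- The coefficient of Δ(exp_l(x)) = Σ_n (1/n!) Δ(xⁿ) at u ⊗ v. -/
def deltaExpCoeff (u v : Option FM1) : ℚ :=
  ∑ n ∈ Finset.range (szO u + szO v + 1),
    (n.factorial : ℚ)⁻¹ * deltaCoeffO (leftPow n) u v

/-! Since Δ is multiplicative and x is primitive, Δ(x^{n+1}) = Δ(xⁿ)·(x ⊗ 1 + 1 ⊗ x), and a
monomial u ⊗ v of Δ(xⁿ)·(x ⊗ 1) comes from Δ(xⁿ) at u' ⊗ v only if u = u'·x.  By induction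
the binomial formula Δ(xⁿ) = Σ_{i+j=n} C(n,i) xⁱ ⊗ xʲ holds for left-normed powers, its
coefficients obeying Pascal's rule.  Then the coefficient of xⁱ ⊗ xʲ in Δ(exp_l x) is
C(i+j,i)/(i+j)! = 1/(i! j!), that of exp_l x ⊗ exp_l x. -/

-- `stripRightX u = some u'` iff `u = u' · x` in the free unital magma, where `1 · x = x`.
def stripRightX : Option FM1 → Option (Option FM1)
  | none => none
  | some (.of _) => some none
  | some (.mul p (.of _)) => some (some p)
  | some (.mul _ (.mul _ _)) => none

lemma FreeMagma.mul_eq_mul_iff {α : Type*} {a b c d : FreeMagma α} :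
    a * b = c * d ↔ a = c ∧ b = d :=
  ⟨fun h => by cases h; exact ⟨rfl, rfl⟩, by rintro ⟨rfl, rfl⟩; rfl⟩

lemma szM_pos (w : FM1) : 0 < szM w := by
  induction w with
  | of _ => simp [szM]
  | mul l r ihl ihr => simp only [szM]; omega

lemma szM_lnp (n : ℕ) : szM (lnp n) = n + 1 := by
  induction n with
  | zero => rfl
  | succ n ih => simp [lnp, szM, ih]

lemma szO_leftPow (n : ℕ) : szO (leftPow n) = n := by
  cases n <;> simp [leftPow, szO, szM_lnp]

lemma stripRightX_eq_some_leftPow_iff {u : Option FM1} {k : ℕ} :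
    stripRightX u = some (leftPow k) ↔ u = leftPow (k + 1) := by
  rcases u with _ | ⟨⟨⟩⟩ | ⟨p, ⟨⟨⟩⟩ | ⟨q, r⟩⟩ <;> rcases k with _ | k <;>
    simp [stripRightX, leftPow, lnp, FreeMagma.mul_eq_mul_iff]

lemma deltaCoeff_mul_of (w : FM1) (u v : Option FM1) :
    deltaCoeff (.mul w (.of ())) u v =
      (stripRightX u).elim 0 (fun u' => deltaCoeff w u' v) +
        (stripRightX v).elim 0 (fun v' => deltaCoeff w u v') := by
  rcases u with _ | ⟨⟨⟩⟩ | ⟨p, ⟨⟨⟩⟩ | ⟨p₁, p₂⟩⟩ <;> rcases v with _ | ⟨⟨⟩⟩ | ⟨q, ⟨⟨⟩⟩ | ⟨q₁, q₂⟩⟩ <;>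
    simp [deltaCoeff, factorizations, stripRightX] <;> ring

lemma deltaCoeffO_leftPow_succ (n : ℕ) (u v : Option FM1) :
    deltaCoeffO (leftPow (n + 1)) u v =
      (stripRightX u).elim 0 (fun u' => deltaCoeffO (leftPow n) u' v) +
        (stripRightX v).elim 0 (fun v' => deltaCoeffO (leftPow n) u v') := by
  cases n with
  | zero =>
    rcases u with _ | ⟨⟨⟩⟩ | ⟨p, ⟨⟨⟩⟩ | ⟨p₁, p₂⟩⟩ <;> rcases v with _ | ⟨⟨⟩⟩ | ⟨q, ⟨⟨⟩⟩ | ⟨q₁, q₂⟩⟩ <;>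
      simp [deltaCoeffO, deltaCoeff, leftPow, lnp, stripRightX]
  | succ n => exact deltaCoeff_mul_of (lnp n) u v

def leftPowBinom (n : ℕ) (u v : Option FM1) : ℚ :=
  if u = leftPow (szO u) ∧ v = leftPow (szO v) ∧ szO u + szO v = n
  then (n.choose (szO u) : ℚ) else 0

lemma leftPowBinom_leftPow (n i j : ℕ) :
    leftPowBinom n (leftPow i) (leftPow j) = if i + j = n then (n.choose i : ℚ) else 0 := by
  simp [leftPowBinom, szO_leftPow]

lemma leftPowBinom_of_ne_left {u : Option FM1} (hu : u ≠ leftPow (szO u)) (n : ℕ)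
    (v : Option FM1) : leftPowBinom n u v = 0 :=
  if_neg fun h => hu h.1

lemma leftPowBinom_of_ne_right {v : Option FM1} (hv : v ≠ leftPow (szO v)) (n : ℕ)
    (u : Option FM1) : leftPowBinom n u v = 0 :=
  if_neg fun h => hv h.2.1

lemma ne_leftPow_of_stripRightX_eq_some {u u' : Option FM1} (h : stripRightX u = some u')
    (hu : u ≠ leftPow (szO u)) : u' ≠ leftPow (szO u') := by
  intro hu'
  rw [hu', stripRightX_eq_some_leftPow_iff] at h
  rw [h, szO_leftPow] at hu
  exact hu rfl

-- Pascal's rule, in the shape of `deltaCoeffO_leftPow_succ`.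
lemma leftPowBinom_succ (n : ℕ) (u v : Option FM1) :
    leftPowBinom (n + 1) u v =
      (stripRightX u).elim 0 (fun u' => leftPowBinom n u' v) +
        (stripRightX v).elim 0 (fun v' => leftPowBinom n u v') := by
  by_cases hu : u = leftPow (szO u)
  · by_cases hv : v = leftPow (szO v)
    · obtain ⟨i, rfl⟩ : ∃ i, u = leftPow i := ⟨_, hu⟩
      obtain ⟨j, rfl⟩ : ∃ j, v = leftPow j := ⟨_, hv⟩
      clear hu hv
      have hstrip₀ : stripRightX (leftPow 0) = none := rfl
      have hstrip (k : ℕ) : stripRightX (leftPow (k + 1)) = some (leftPow k) :=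
        stripRightX_eq_some_leftPow_iff.mpr rfl
      rcases i with _ | i <;> rcases j with _ | j <;>
        simp only [hstrip₀, hstrip, Option.elim, leftPowBinom_leftPow] <;>
        split_ifs <;> first | omega | simp_all [Nat.choose_succ_succ']
    · rcases hs : stripRightX v with _ | v'
      · cases stripRightX u <;> simp [leftPowBinom_of_ne_right hv]
      · have hv' := ne_leftPow_of_stripRightX_eq_some hs hv
        cases stripRightX u <;> simp [leftPowBinom_of_ne_right hv, leftPowBinom_of_ne_right hv']
  · rcases hs : stripRightX u with _ | u'
    · cases stripRightX v <;> simp [leftPowBinom_of_ne_left hu]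
    · have hu' := ne_leftPow_of_stripRightX_eq_some hs hu
      cases stripRightX v <;> simp [leftPowBinom_of_ne_left hu, leftPowBinom_of_ne_left hu']

lemma deltaCoeffO_leftPow (n : ℕ) (u v : Option FM1) :
    deltaCoeffO (leftPow n) u v = leftPowBinom n u v := by
  induction n generalizing u v with
  | zero =>
    rcases u with _ | u <;> rcases v with _ | v <;>
      simp [deltaCoeffO, leftPowBinom, leftPow, szO, (szM_pos _).ne']
  | succ n ih => simp only [deltaCoeffO_leftPow_succ, leftPowBinom_succ, ih]

lemma factorial_inv_mul_add_choose (a b : ℕ) :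
    ((a + b).factorial : ℚ)⁻¹ * (a + b).choose a =
      (a.factorial : ℚ)⁻¹ * (b.factorial : ℚ)⁻¹ := by
  rw [Nat.cast_add_choose]
  field_simp

lemma factorial_inv_mul_leftPowBinom (u v : Option FM1) :
    ((szO u + szO v).factorial : ℚ)⁻¹ * leftPowBinom (szO u + szO v) u v =
      expCoeff u * expCoeff v := by
  unfold leftPowBinom expCoeff
  by_cases hu : u = leftPow (szO u)
  · by_cases hv : v = leftPow (szO v)
    · rw [if_pos ⟨hu, hv, rfl⟩, if_pos hu, if_pos hv, factorial_inv_mul_add_choose]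
    · rw [if_neg fun h => hv h.2.1, if_neg hv, mul_zero, mul_zero]
  · rw [if_neg fun h => hu h.1, if_neg hu, mul_zero, zero_mul]

theorem expl_is_group_like :
    (∀ u v : Option FM1, deltaExpCoeff u v = expCoeff u * expCoeff v) ∧
      expCoeff none = 1 := by
  refine ⟨fun u v => ?_, by simp [expCoeff, szO, leftPow]⟩
  have h_off_diagonal : ∀ n ∈ Finset.range (szO u + szO v + 1), n ≠ szO u + szO v →
      (n.factorial : ℚ)⁻¹ * deltaCoeffO (leftPow n) u v = 0 := by
    intro n _ hn
    rw [deltaCoeffO_leftPow, leftPowBinom, if_neg fun h => hn h.2.2.symm, mul_zero]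
  rw [deltaExpCoeff, Finset.sum_eq_single_of_mem _ (Finset.self_mem_range_succ _) h_off_diagonal,
    deltaCoeffO_leftPow, factorial_inv_mul_leftPowBinom]
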